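/- Constant normal direction for ruled meridian surfaces of elliptic type (from the proof of Theorem 6.1, case (ii)): suppose the elliptic meridian data satisfy κ ≡ c on J for a constant c, and f(u) = au + a₁, g(u) = bu + b₁ on I with constants a, a₁, b, b₁ satisfying a² − b² = 1 and b ≠ 0. (a) If c² > b², set θ := artanh(b/c); then the map (u,v) ↦ sinh θ·n₁(v) + cosh θ·n₂(u,v) (= sinh θ·n(v) + cosh θ·(b·l(v) + a·e₄)) is constant on I × J, and ⟨z(u,v), N⟩ = cosh θ·(b·a₁ − a·b₁) for all (u,v), where N denotes this constant vector. (b) If c² < b², set θ := artanh(c/b); then the map (u,v) ↦ cosh θ·n₁(v) + sinh θ·n₂(u,v) is constant on I × J, and ⟨z(u,v), N⟩ = sinh θ·(b·a₁ − a·b₁) for all (u,v), where N denotes this constant vector. In particular, in both cases the surface lies in a fixed hyperplane of Minkowski 4-space. -/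

import Mathlib

noncomputable section

/-- The Minkowski inner product on `ℝ⁴` of signature `(3,1)`:
`⟨x,y⟩ = x₁y₁ + x₂y₂ + x₃y₃ − x₄y₄`. -/
def mink (x y : Fin 4 → ℝ) : ℝ :=
  x 0 * y 0 + x 1 * y 1 + x 2 * y 2 - x 3 * y 3

/-- The fourth standard basis vector `e₄` of `ℝ⁴`. -/
def e4 : Fin 4 → ℝ := fun i => if i = 3 then 1 else 0

/-- The wedge product `a ∧ b`, an antisymmetric `4 × 4` real matrix with entries
`(a ∧ b)_{ij} = aᵢbⱼ − aⱼbᵢ`. -/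
def wedge (a b : Fin 4 → ℝ) : Fin 4 → Fin 4 → ℝ :=
  fun i j => a i * b j - a j * b i

/-- Elliptic meridian data in Minkowski 4-space: nonempty open intervals `I, J ⊆ ℝ`,
smooth functions `f, g : I → ℝ` with `f > 0` and `f′² − g′² = 1` on `I`, and smooth maps
`l, n : J → ℝ⁴` with values in the hyperplane `{x₄ = 0}` such that `⟨l,l⟩ ≡ 1`,
`⟨t,t⟩ ≡ 1` where `t := l′`, `⟨n,n⟩ ≡ 1`, `⟨l,n⟩ ≡ 0`, `⟨t,n⟩ ≡ 0` on `J`. -/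
structure EllipticData where
  I : Set ℝ
  J : Set ℝ
  hI : IsOpen I
  hJ : IsOpen J
  hIne : I.Nonempty
  hJne : J.Nonempty
  hIconn : I.OrdConnected
  hJconn : J.OrdConnected
  f : ℝ → ℝ
  g : ℝ → ℝ
  hf : ContDiffOn ℝ (⊤ : ℕ∞) f I
  hg : ContDiffOn ℝ (⊤ : ℕ∞) g I
  hfpos : ∀ u ∈ I, 0 < f u
  hunit : ∀ u ∈ I, (deriv f u) ^ 2 - (deriv g u) ^ 2 = 1
  l : ℝ → Fin 4 → ℝ
  n : ℝ → Fin 4 → ℝ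
  hl : ContDiffOn ℝ (⊤ : ℕ∞) l J
  hn : ContDiffOn ℝ (⊤ : ℕ∞) n J
  hlplane : ∀ v ∈ J, l v 3 = 0
  hnplane : ∀ v ∈ J, n v 3 = 0
  hll : ∀ v ∈ J, mink (l v) (l v) = 1
  htt : ∀ v ∈ J, mink (deriv l v) (deriv l v) = 1
  hnn : ∀ v ∈ J, mink (n v) (n v) = 1
  hln : ∀ v ∈ J, mink (l v) (n v) = 0
  htn : ∀ v ∈ J, mink (deriv l v) (n v) = 0

namespace EllipticData

variable (d : EllipticData)

/-- The unit tangent `t := l′` of the curve `c` on `S²(1)`. -/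
def t : ℝ → Fin 4 → ℝ := fun v => deriv d.l v

/-- The spherical curvature `κ := ⟨t′, n⟩` of the curve `c`. -/
def kappa : ℝ → ℝ := fun v => mink (deriv d.t v) (d.n v)

/-- The curvature `κ_m := f′g″ − g′f″` of the meridian curve `m`. -/
def kappaM : ℝ → ℝ := fun u =>
  deriv d.f u * deriv (deriv d.g) u - deriv d.g u * deriv (deriv d.f) u

/-- The meridian surface of elliptic type `z(u,v) := f(u)·l(v) + g(u)·e₄`. -/
def z : ℝ → ℝ → Fin 4 → ℝ := fun u v => d.f u • d.l v + d.g u • e4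

/-- The tangent frame vector `x := f′·l + g′·e₄`. -/
def x : ℝ → ℝ → Fin 4 → ℝ := fun u v => deriv d.f u • d.l v + deriv d.g u • e4

/-- The normal frame vector `n₂ := g′·l + f′·e₄`. -/
def n2 : ℝ → ℝ → Fin 4 → ℝ := fun u v => deriv d.g u • d.l v + deriv d.f u • e4

/-- The Gauss map `G := x ∧ y` (with `y = t`). -/
def G : ℝ → ℝ → Fin 4 → Fin 4 → ℝ := fun u v => wedge (d.x u v) (d.t v)

/-- The Laplacian of the Gauss map with respect to the induced metric `du² + f(u)²dv²`:
`ΔG := −(∂²G/∂u² + (1/f²)·∂²G/∂v² + (f′/f)·∂G/∂u)`, computed entrywise. -/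
def lapG : ℝ → ℝ → Fin 4 → Fin 4 → ℝ := fun u v =>
  -(deriv (fun u' => deriv (fun u'' => d.G u'' v) u') u
    + (1 / (d.f u) ^ 2) • deriv (fun v' => deriv (fun v'' => d.G u v'') v') v
    + (deriv d.f u / d.f u) • deriv (fun u' => d.G u' v) u)

/-- The mean curvature vector
`H := (1/2)(∂²z/∂u² + (1/f²)·∂²z/∂v² + (f′/f)·∂z/∂u)`. -/
def H : ℝ → ℝ → Fin 4 → ℝ := fun u v =>
  (1 / 2 : ℝ) • (deriv (fun u' => deriv (fun u'' => d.z u'' v) u') u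
    + (1 / (d.f u) ^ 2) • deriv (fun v' => deriv (fun v'' => d.z u v'') v') v
    + (deriv d.f u / d.f u) • deriv (fun u' => d.z u' v) u)

end EllipticData

/-- The inverse hyperbolic tangent `artanh x = (1/2)·log((1 + x)/(1 − x))`. -/
def artanh (x : ℝ) : ℝ := (1 / 2) * Real.log ((1 + x) / (1 - x))

lemma sinh_artanh_mul {x : ℝ} (h1 : -1 < x) (h2 : x < 1) :
    Real.sinh (artanh x) = x * Real.cosh (artanh x) := by
  have hr : (0:ℝ) < (1 + x) / (1 - x) := div_pos (by linarith) (by linarith)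
  have hE2 : Real.exp (artanh x) * Real.exp (artanh x) = (1 + x) / (1 - x) := by
    rw [← Real.exp_add]
    rw [show artanh x + artanh x = Real.log ((1+x)/(1-x)) by rw [artanh]; ring]
    exact Real.exp_log hr
  have hEpos := Real.exp_pos (artanh x)
  rw [Real.sinh_eq, Real.cosh_eq, Real.exp_neg]
  have h1x : (1:ℝ) - x ≠ 0 := by linarith
  field_simp at hE2 ⊢
  linear_combination hE2

lemma mink_comm (x y : Fin 4 → ℝ) : mink x y = mink y x := by
  simp only [mink]; ring

lemma mink_add_smul_left (x y z : Fin 4 → ℝ) (c : ℝ) :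
    mink (x + c • y) z = mink x z + c * mink y z := by
  simp only [mink, Pi.add_apply, Pi.smul_apply, smul_eq_mul]; ring

lemma frame_zero (p q r w : Fin 4 → ℝ)
    (hp3 : p 3 = 0) (hq3 : q 3 = 0) (hr3 : r 3 = 0) (hw3 : w 3 = 0)
    (hpp : mink p p = 1) (hqq : mink q q = 1) (hrr : mink r r = 1)
    (hpq : mink p q = 0) (hpr : mink p r = 0) (hqr : mink q r = 0)
    (hwp : mink w p = 0) (hwq : mink w q = 0) (hwr : mink w r = 0) :
    w = 0 := by
  simp only [mink, hp3, hq3, hr3, hw3, mul_zero, zero_mul, sub_zero]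
    at hpp hqq hrr hpq hpr hqr hwp hwq hwr
  set A : Matrix (Fin 3) (Fin 3) ℝ :=
    Matrix.of ![![p 0, p 1, p 2], ![q 0, q 1, q 2], ![r 0, r 1, r 2]] with hA
  set B : Matrix (Fin 3) (Fin 3) ℝ :=
    Matrix.of ![![p 0, q 0, r 0], ![p 1, q 1, r 1], ![p 2, q 2, r 2]] with hB
  have hAB : A * B = 1 := by
    ext i j
    fin_cases i <;> fin_cases j <;>
      simp [hA, hB, Matrix.mul_apply, Fin.sum_univ_succ, Matrix.one_apply] <;> linarith
  have hBA : B * A = 1 := mul_eq_one_comm.mp hAB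
  set w3 : Fin 3 → ℝ := ![w 0, w 1, w 2] with hw
  have hmv : A.mulVec w3 = 0 := by
    ext i
    fin_cases i <;>
      simp [hA, hw, Matrix.mulVec, dotProduct, Fin.sum_univ_succ] <;> linarith
  have hz : w3 = 0 := by
    have h1 : (B * A).mulVec w3 = w3 := by rw [hBA, Matrix.one_mulVec]
    rw [← Matrix.mulVec_mulVec, hmv, Matrix.mulVec_zero] at h1
    exact h1.symm
  funext i
  fin_cases i
  · exact congrFun hz 0
  · exact congrFun hz 1
  · exact congrFun hz 2
  · exact hw3

lemma hasDerivAt_mink {F G : ℝ → Fin 4 → ℝ} {F' G' : Fin 4 → ℝ} {v : ℝ}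
    (hF : HasDerivAt F F' v) (hG : HasDerivAt G G' v) :
    HasDerivAt (fun w => mink (F w) (G w)) (mink F' (G v) + mink (F v) G') v := by
  have hFi := hasDerivAt_pi.mp hF
  have hGi := hasDerivAt_pi.mp hG
  have h := ((((hFi 0).mul (hGi 0)).add ((hFi 1).mul (hGi 1))).add
      ((hFi 2).mul (hGi 2))).sub ((hFi 3).mul (hGi 3))
  refine HasDerivAt.congr_deriv (f := fun w => mink (F w) (G w)) h ?_
  simp only [mink]; ring

lemma deriv_eq_zero_of_const {h : ℝ → ℝ} {s : Set ℝ} (hs : IsOpen s) {cst : ℝ}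
    (hc : ∀ x ∈ s, h x = cst) {v : ℝ} (hv : v ∈ s) {h' : ℝ} (hd : HasDerivAt h h' v) :
    h' = 0 := by
  have hev : h =ᶠ[nhds v] fun _ => cst := Filter.eventuallyEq_of_mem (hs.mem_nhds hv) hc
  exact hd.unique ((hasDerivAt_const v cst).congr_of_eventuallyEq hev)

/-- **Constant normal direction for ruled meridian surfaces of elliptic type** (from the
proof of Theorem 6.1, case (ii)): suppose `κ ≡ c` on `J` and `f(u) = au + a₁`,
`g(u) = bu + b₁` on `I` with `a² − b² = 1` and `b ≠ 0`.
(a) If `c² > b²` and `θ := artanh(b/c)`, the map `(u,v) ↦ sinh θ·n₁ + cosh θ·n₂`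
(`= sinh θ·n + cosh θ·(b·l + a·e₄)`) is constant on `I × J`, and
`⟨z, N⟩ = cosh θ·(b·a₁ − a·b₁)` everywhere, for this constant vector `N`.
(b) If `c² < b²` and `θ := artanh(c/b)`, the map `(u,v) ↦ cosh θ·n₁ + sinh θ·n₂` is
constant on `I × J`, and `⟨z, N⟩ = sinh θ·(b·a₁ − a·b₁)` everywhere, for this constant
vector `N`.
In both cases the surface lies in a fixed hyperplane of Minkowski 4-space
(here `n₁ = n`). -/
theorem constant_normal_direction_elliptic (d : EllipticData)
    (c a a₁ b b₁ : ℝ) (hab : a ^ 2 - b ^ 2 = 1) (hb : b ≠ 0)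
    (hk : ∀ v ∈ d.J, d.kappa v = c)
    (hfa : ∀ u ∈ d.I, d.f u = a * u + a₁)
    (hgb : ∀ u ∈ d.I, d.g u = b * u + b₁) :
    (b ^ 2 < c ^ 2 →
      ∃ N : Fin 4 → ℝ,
        (∀ u ∈ d.I, ∀ v ∈ d.J,
           Real.sinh (artanh (b / c)) • d.n v + Real.cosh (artanh (b / c)) • d.n2 u v = N) ∧
        (∀ v ∈ d.J,
           Real.sinh (artanh (b / c)) • d.n v
             + Real.cosh (artanh (b / c)) • (b • d.l v + a • e4) = N) ∧
        (∀ u ∈ d.I, ∀ v ∈ d.J,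
           mink (d.z u v) N = Real.cosh (artanh (b / c)) * (b * a₁ - a * b₁))) ∧
    (c ^ 2 < b ^ 2 →
      ∃ N : Fin 4 → ℝ,
        (∀ u ∈ d.I, ∀ v ∈ d.J,
           Real.cosh (artanh (c / b)) • d.n v + Real.sinh (artanh (c / b)) • d.n2 u v = N) ∧
        (∀ u ∈ d.I, ∀ v ∈ d.J,
           mink (d.z u v) N = Real.sinh (artanh (c / b)) * (b * a₁ - a * b₁))) := by
    classical
  -- basic derivative availability on J
  have hderl : ∀ v ∈ d.J, HasDerivAt d.l (d.t v) v := fun v hv =>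
    ((d.hl.contDiffAt (d.hJ.mem_nhds hv)).differentiableAt (by simp)).hasDerivAt
  have ht_eq : ∀ v : ℝ, deriv d.l v = d.t v := fun _ => rfl
  have htJ : ContDiffOn ℝ (⊤ : ℕ∞) d.t d.J := d.hl.deriv_of_isOpen d.hJ (by simp)
  have hdert : ∀ v ∈ d.J, HasDerivAt d.t (deriv d.t v) v := fun v hv =>
    ((htJ.contDiffAt (d.hJ.mem_nhds hv)).differentiableAt (by simp)).hasDerivAt
  have hdern : ∀ v ∈ d.J, HasDerivAt d.n (deriv d.n v) v := fun v hv =>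
    ((d.hn.contDiffAt (d.hJ.mem_nhds hv)).differentiableAt (by simp)).hasDerivAt
  have ht3 : ∀ v ∈ d.J, d.t v 3 = 0 := fun v hv =>
    deriv_eq_zero_of_const d.hJ d.hlplane hv (hasDerivAt_pi.mp (hderl v hv) 3)
  have hn'3 : ∀ v ∈ d.J, deriv d.n v 3 = 0 := fun v hv =>
    deriv_eq_zero_of_const d.hJ d.hnplane hv (hasDerivAt_pi.mp (hdern v hv) 3)
  have htl : ∀ v ∈ d.J, mink (d.t v) (d.l v) = 0 := by
    intro v hv
    have h0 := deriv_eq_zero_of_const d.hJ d.hll hv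
      (hasDerivAt_mink (hderl v hv) (hderl v hv))
    have hcomm := mink_comm (d.l v) (d.t v)
    linarith
  have hn'l : ∀ v ∈ d.J, mink (deriv d.n v) (d.l v) = 0 := by
    intro v hv
    have h0 := deriv_eq_zero_of_const d.hJ d.hln hv
      (hasDerivAt_mink (hderl v hv) (hdern v hv))
    have h1 := d.htn v hv
    rw [ht_eq] at h1
    have hcomm := mink_comm (d.l v) (deriv d.n v)
    linarith
  have hn'n : ∀ v ∈ d.J, mink (deriv d.n v) (d.n v) = 0 := by
    intro v hv
    have h0 := deriv_eq_zero_of_const d.hJ d.hnn hv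
      (hasDerivAt_mink (hdern v hv) (hdern v hv))
    have hcomm := mink_comm (d.n v) (deriv d.n v)
    linarith
  have hn't : ∀ v ∈ d.J, mink (deriv d.n v) (d.t v) = -c := by
    intro v hv
    have h0 : mink (deriv d.t v) (d.n v) + mink (d.t v) (deriv d.n v) = 0 :=
      deriv_eq_zero_of_const d.hJ d.htn hv (hasDerivAt_mink (hdert v hv) (hdern v hv))
    have hκ : mink (deriv d.t v) (d.n v) = c := hk v hv
    have hcomm := mink_comm (d.t v) (deriv d.n v)
    linarith
  -- n' = -(c • t)
  have hn' : ∀ v ∈ d.J, deriv d.n v = -(c • d.t v) := by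
    intro v hv
    have hw : deriv d.n v + c • d.t v = 0 := by
      apply frame_zero (d.l v) (d.t v) (d.n v)
      · exact d.hlplane v hv
      · exact ht3 v hv
      · exact d.hnplane v hv
      · simp [Pi.add_apply, hn'3 v hv, ht3 v hv]
      · exact d.hll v hv
      · have h2 := d.htt v hv; rw [ht_eq] at h2; exact h2
      · exact d.hnn v hv
      · rw [mink_comm]; exact htl v hv
      · exact d.hln v hv
      · have h2 := d.htn v hv; rw [ht_eq] at h2; exact h2
      · rw [mink_add_smul_left, hn'l v hv, htl v hv]; ring
      · have h2 := d.htt v hv; rw [ht_eq] at h2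
        rw [mink_add_smul_left, hn't v hv, h2]; ring
      · have h2 := d.htn v hv
        rw [ht_eq] at h2
        rw [mink_add_smul_left, hn'n v hv, h2]; ring
    exact eq_neg_of_add_eq_zero_left hw
  -- derivatives of f and g on I
  have hdf : ∀ u ∈ d.I, deriv d.f u = a := by
    intro u hu
    have hev : d.f =ᶠ[nhds u] fun x => a * x + a₁ :=
      Filter.eventuallyEq_of_mem (d.hI.mem_nhds hu) hfa
    rw [hev.deriv_eq]
    have h := (((hasDerivAt_id u).const_mul a).add_const a₁).deriv
    simpa using h
  have hdg : ∀ u ∈ d.I, deriv d.g u = b := by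
    intro u hu
    have hev : d.g =ᶠ[nhds u] fun x => b * x + b₁ :=
      Filter.eventuallyEq_of_mem (d.hI.mem_nhds hu) hgb
    rw [hev.deriv_eq]
    have h := (((hasDerivAt_id u).const_mul b).add_const b₁).deriv
    simpa using h
  have hn2 : ∀ u ∈ d.I, ∀ v : ℝ, d.n2 u v = b • d.l v + a • e4 := by
    intro u hu v
    unfold EllipticData.n2
    rw [hdf u hu, hdg u hu]
  -- constancy of the candidate normal field
  have key : ∀ s C : ℝ, s * c = C * b → ∀ v₀ ∈ d.J, ∀ v ∈ d.J,
      s • d.n v + C • (b • d.l v + a • e4)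
        = s • d.n v₀ + C • (b • d.l v₀ + a • e4) := by
    intro s C hsC v₀ hv₀ v hv
    set Φ : ℝ → Fin 4 → ℝ := fun v => s • d.n v + C • (b • d.l v + a • e4) with hΦ
    have hΦd : ∀ x ∈ d.J, HasDerivAt Φ 0 x := by
      intro x hx
      have h1 : HasDerivAt d.n (-(c • d.t x)) x := by
        rw [← hn' x hx]; exact hdern x hx
      have h2 : HasDerivAt (fun v => b • d.l v + a • e4) (b • d.t x) x :=
        ((hderl x hx).const_smul b).add_const (a • e4)
      have h3 := (h1.const_smul s).add (h2.const_smul C)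
      refine HasDerivAt.congr_deriv (f := Φ) h3 ?_
      funext i
      simp only [Pi.add_apply, Pi.smul_apply, Pi.neg_apply, Pi.zero_apply, smul_eq_mul,
        mul_neg]
      linear_combination -(d.t x i) * hsC
    have hJc : Convex ℝ d.J := d.hJconn.convex
    have hdiff : DifferentiableOn ℝ Φ d.J := fun x hx =>
      (hΦd x hx).differentiableAt.differentiableWithinAt
    have hfder : ∀ x ∈ d.J, fderivWithin ℝ Φ d.J x = 0 := by
      intro x hx
      rw [fderivWithin_of_isOpen d.hJ hx, (hΦd x hx).hasFDerivAt.fderiv]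
      ext y
      simp
    exact hJc.is_const_of_fderivWithin_eq_zero hdiff hfder hv hv₀
  -- the Minkowski product computation
  have hminkZ : ∀ s C : ℝ, ∀ u ∈ d.I, ∀ v ∈ d.J,
      mink (d.z u v) (s • d.n v + C • (b • d.l v + a • e4))
        = C * (b * a₁ - a * b₁) := by
    intro s C u hu v hv
    have hll := d.hll v hv
    have hln := d.hln v hv
    have hl3 := d.hlplane v hv
    have hn3 := d.hnplane v hv
    have hf := hfa u hu
    have hg := hgb u hu
    simp only [mink, hl3, hn3, mul_zero, zero_mul, sub_zero] at hll hln
    have he0 : e4 0 = 0 := rfl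
    have he1 : e4 1 = 0 := rfl
    have he2 : e4 2 = 0 := rfl
    have he3 : e4 3 = 1 := rfl
    simp only [EllipticData.z, mink, Pi.add_apply, Pi.smul_apply, smul_eq_mul,
      he0, he1, he2, he3, hl3, hn3, hf, hg, mul_zero, zero_mul, mul_one, add_zero, zero_add]
    linear_combination (C * b * (a * u + a₁)) * hll + (s * (a * u + a₁)) * hln
  obtain ⟨v₀, hv₀⟩ := d.hJne
  constructor
  · -- case (a)
    intro hbc
    have hc0 : c ≠ 0 := by
      intro h
      rw [h] at hbc
      nlinarith [sq_nonneg b]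
    have hx2 : (b / c) ^ 2 < 1 := by
      rw [div_pow]
      exact (div_lt_one (by positivity)).mpr hbc
    have hx := abs_lt.mp ((sq_lt_one_iff_abs_lt_one _).mp hx2)
    have hsc : Real.sinh (artanh (b / c)) * c = Real.cosh (artanh (b / c)) * b := by
      rw [sinh_artanh_mul hx.1 hx.2]
      field_simp
    refine ⟨Real.sinh (artanh (b / c)) • d.n v₀
        + Real.cosh (artanh (b / c)) • (b • d.l v₀ + a • e4), ?_, ?_, ?_⟩
    · intro u hu v hv
      rw [hn2 u hu v]
      exact key _ _ hsc v₀ hv₀ v hv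
    · intro v hv
      exact key _ _ hsc v₀ hv₀ v hv
    · intro u hu v hv
      rw [← key _ _ hsc v₀ hv₀ v hv]
      exact hminkZ _ _ u hu v hv
  · -- case (b)
    intro hcb
    have hx2 : (c / b) ^ 2 < 1 := by
      rw [div_pow]
      exact (div_lt_one (by positivity)).mpr hcb
    have hx := abs_lt.mp ((sq_lt_one_iff_abs_lt_one _).mp hx2)
    have hsc : Real.cosh (artanh (c / b)) * c = Real.sinh (artanh (c / b)) * b := by
      rw [sinh_artanh_mul hx.1 hx.2]
      field_simp
    refine ⟨Real.cosh (artanh (c / b)) • d.n v₀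
        + Real.sinh (artanh (c / b)) • (b • d.l v₀ + a • e4), ?_, ?_⟩
    · intro u hu v hv
      rw [hn2 u hu v]
      exact key _ _ hsc v₀ hv₀ v hv
    · intro u hu v hv
      rw [← key _ _ hsc v₀ hv₀ v hv]
      exact hminkZ _ _ u hu v hv
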